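/- The two extended Lindblad generators have identical diagonal blocks: under Assumption (R^{ij}_{−α} = δ_{ij} Lⁱ_α for α = 1,…,m₁), for every dn×dn complex matrix τ with diagonal blocks τⱼ = (I_d ⊗ Eⱼⱼ-compression of τ), one has, for every i, the i-th diagonal block of 𝓛̃[τ] equals the i-th diagonal block of 𝓛[τ], and both equal 𝒦ᵢ(τ₁,…,τₙ). -/

import Mathlib

/-!
Read a matrix on `ℂᵈ ⊗ ℂⁿ` as an `n × n` array of `d × d` blocks. Each Lindblad operator `A`
of either extension has in block row `j` at most the one block `C j` at column `g j`: for
`R^{pq}_α ⊗ E_pq` the single block `(p, q)`, for `V_α` the diagonal, for `S^q_β` the `q`-th block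
column. For such `A` the `(i, i)` block of `A τ A*` is `C i τ_{g i} (C i)*`, and `A* A` is block
diagonal with blocks `∑_{g l = i} (C l)* C l`; hence the `(i, i)` block of the dissipator of `A`
only involves the diagonal blocks of `τ`, and summing over all operators regroups into `𝒦ᵢ`.
-/

open Matrix Kronecker

/-- A generic Lindblad generator `τ ↦ −i[H,τ] + ∑_γ ( A_γ τ A_γ* − ½{A_γ* A_γ, τ} )`. -/
noncomputable def lindGen {N : Type*} [Fintype N] {ι : Type*} [Fintype ι]
    (H : Matrix N N ℂ) (A : ι → Matrix N N ℂ) (τ : Matrix N N ℂ) : Matrix N N ℂ :=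
  -Complex.I • (H * τ - τ * H)
    + ∑ γ : ι, (A γ * τ * (A γ)ᴴ - (1/2 : ℂ) • ((A γ)ᴴ * A γ * τ + τ * ((A γ)ᴴ * A γ)))

/-- The Lindblad rate generator
`𝒦ᵢ(τ₁,…,τₙ) = −i[Hⁱ,τᵢ] + ∑_{α∈A} ∑_k ( R^{ik}_α τ_k (R^{ik}_α)* − ½{(R^{ki}_α)* R^{ki}_α, τᵢ} )`. -/
noncomputable def Kgen {n d : ℕ} {A : Type*} [Fintype A]
    (H : Fin n → Matrix (Fin d) (Fin d) ℂ)
    (R : A → Fin n → Fin n → Matrix (Fin d) (Fin d) ℂ)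
    (τ : Fin n → Matrix (Fin d) (Fin d) ℂ) (i : Fin n) :
    Matrix (Fin d) (Fin d) ℂ :=
  -Complex.I • (H i * τ i - τ i * H i)
    + ∑ α : A, ∑ k : Fin n,
      (R α i k * τ k * (R α i k)ᴴ
        - (1/2 : ℂ) • ((R α k i)ᴴ * R α k i * τ i + τ i * ((R α k i)ᴴ * R α k i)))

/-- The full family of operators `R^{ij}_α`, `α ∈ A = {−m₁,…,−1} ⊔ {1,…,m₂}`, under the
assumption `R^{ij}_{−α} = δ_{ij} Lⁱ_α`: the negative indices (`Sum.inl`) carry the diagonal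
operators `Lⁱ_α`, the positive ones (`Sum.inr`) the operators `R^{ij}_β`. -/
noncomputable def Rfull {n d m₁ m₂ : ℕ}
    (L : Fin m₁ → Fin n → Matrix (Fin d) (Fin d) ℂ)
    (R : Fin m₂ → Fin n → Fin n → Matrix (Fin d) (Fin d) ℂ) :
    (Fin m₁ ⊕ Fin m₂) → Fin n → Fin n → Matrix (Fin d) (Fin d) ℂ :=
  Sum.elim (fun α i j => if i = j then L α i else 0) R

/-- The `i`-th diagonal block of a matrix on `ℋ_S ⊗ ℂⁿ` (compression by `I_d ⊗ Eᵢᵢ`). -/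
def blk {n d : ℕ} (X : Matrix (Fin d × Fin n) (Fin d × Fin n) ℂ) (i : Fin n) :
    Matrix (Fin d) (Fin d) ℂ :=
  Matrix.of fun a c => X (a, i) (c, i)

section Blocks

variable {m m' m'' ι κ ν α : Type*}

def blockAt (X : Matrix (m × ι) (m' × κ) α) (j : ι) (k : κ) : Matrix m m' α :=
  of fun a c => X (a, j) (c, k)

lemma blk_eq_blockAt {n d : ℕ} (X : Matrix (Fin d × Fin n) (Fin d × Fin n) ℂ) (i : Fin n) :
    blk X i = blockAt X i i := rfl

@[simp] lemma blockAt_add [Add α] (X Y : Matrix (m × ι) (m' × κ) α) (j : ι) (k : κ) :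
    blockAt (X + Y) j k = blockAt X j k + blockAt Y j k := rfl

@[simp] lemma blockAt_sub [Sub α] (X Y : Matrix (m × ι) (m' × κ) α) (j : ι) (k : κ) :
    blockAt (X - Y) j k = blockAt X j k - blockAt Y j k := rfl

@[simp] lemma blockAt_smul {R : Type*} [SMul R α] (c : R) (X : Matrix (m × ι) (m' × κ) α)
    (j : ι) (k : κ) : blockAt (c • X) j k = c • blockAt X j k := rfl

@[simp] lemma blockAt_sum [AddCommMonoid α] {γ : Type*} (s : Finset γ)
    (X : γ → Matrix (m × ι) (m' × κ) α) (j : ι) (k : κ) :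
    blockAt (∑ x ∈ s, X x) j k = ∑ x ∈ s, blockAt (X x) j k := by
  ext a c
  simp [blockAt, Matrix.sum_apply]

lemma blockAt_mul [Fintype m'] [Fintype κ] [NonUnitalNonAssocSemiring α]
    (X : Matrix (m × ι) (m' × κ) α) (Y : Matrix (m' × κ) (m'' × ν) α) (j : ι) (k : ν) :
    blockAt (X * Y) j k = ∑ l, blockAt X j l * blockAt Y l k := by
  ext a c
  simp only [blockAt, mul_apply, of_apply, Matrix.sum_apply, Fintype.sum_prod_type]
  exact Finset.sum_comm

lemma blockAt_conjTranspose [Star α] (X : Matrix (m × ι) (m' × κ) α) (j : κ) (k : ι) :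
    blockAt Xᴴ j k = (blockAt X k j)ᴴ := rfl

lemma blockAt_kronecker_single [MulZeroOneClass α] [DecidableEq ι] [DecidableEq κ]
    (B : Matrix m m' α) (p : ι) (q : κ) (j : ι) (k : κ) :
    blockAt (B ⊗ₖ single p q 1) j k = if j = p ∧ k = q then B else 0 := by
  ext a c
  by_cases h : j = p ∧ k = q <;> aesop (add simp [blockAt, single_apply])

lemma blockAt_sum_kronecker_single [Fintype ι] [NonAssocSemiring α] [DecidableEq ι]
    [DecidableEq κ] (C : ι → Matrix m m' α) (g : ι → κ) (j : ι) (k : κ) :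
    blockAt (∑ l, C l ⊗ₖ single l (g l) 1) j k = if k = g j then C j else 0 := by
  simp [blockAt_kronecker_single, ite_and]

lemma blockAt_sum_kronecker_single_self [Fintype ι] [NonAssocSemiring α] [DecidableEq ι]
    (C : ι → Matrix m m' α) (j k : ι) :
    blockAt (∑ l, C l ⊗ₖ single l l 1) j k = if k = j then C j else 0 :=
  blockAt_sum_kronecker_single C id j k

end Blocks

section BlockMonomial

variable {m ι α : Type*} [Fintype m] [Fintype ι] [DecidableEq ι] [Semiring α]
  {A : Matrix (m × ι) (m × ι) α} {C : ι → Matrix m m α}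

lemma blockAt_blockDiagonal_mul (hA : ∀ j k, blockAt A j k = if k = j then C j else 0)
    (X : Matrix (m × ι) (m × ι) α) (j k : ι) :
    blockAt (A * X) j k = C j * blockAt X j k := by
  simp [blockAt_mul, hA]

lemma blockAt_mul_blockDiagonal (hA : ∀ j k, blockAt A j k = if k = j then C j else 0)
    (X : Matrix (m × ι) (m × ι) α) (j k : ι) :
    blockAt (X * A) j k = blockAt X j k * C k := by
  simp [blockAt_mul, hA]

variable [StarRing α] {g : ι → ι}

lemma blockAt_conjTranspose_mul_self (hA : ∀ j k, blockAt A j k = if k = g j then C j else 0)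
    (j k : ι) :
    blockAt (Aᴴ * A) j k
      = if k = j then ∑ l, if g l = j then (C l)ᴴ * C l else 0 else 0 := by
  simp only [blockAt_mul, blockAt_conjTranspose, hA]
  split_ifs with h
  · subst h
    refine Finset.sum_congr rfl fun l _ => ?_
    split_ifs <;> simp_all [eq_comm]
  · refine Finset.sum_eq_zero fun l _ => ?_
    split_ifs <;> simp_all

lemma blockAt_mul_mul_conjTranspose
    (hA : ∀ j k, blockAt A j k = if k = g j then C j else 0)
    (X : Matrix (m × ι) (m × ι) α) (i : ι) :
    blockAt (A * X * Aᴴ) i i = C i * blockAt X (g i) (g i) * (C i)ᴴ := by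
  simp [blockAt_mul, blockAt_conjTranspose, hA, apply_ite conjTranspose]

end BlockMonomial

noncomputable section Dissipator

variable {N : Type*} [Fintype N]

def dissipator (A τ : Matrix N N ℂ) : Matrix N N ℂ :=
  A * τ * Aᴴ - (1/2 : ℂ) • (Aᴴ * A * τ + τ * (Aᴴ * A))

lemma lindGen_eq_add_sum_dissipator {ι : Type*} [Fintype ι] (H : Matrix N N ℂ)
    (A : ι → Matrix N N ℂ) (τ : Matrix N N ℂ) :
    lindGen H A τ = -Complex.I • (H * τ - τ * H) + ∑ γ, dissipator (A γ) τ := rfl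

end Dissipator

noncomputable def rateDissipator {m ι : Type*} [Fintype m] [Fintype ι]
    (R : ι → ι → Matrix m m ℂ) (τ : ι → Matrix m m ℂ) (i : ι) : Matrix m m ℂ :=
  ∑ k, (R i k * τ k * (R i k)ᴴ
    - (1/2 : ℂ) • ((R k i)ᴴ * R k i * τ i + τ i * ((R k i)ᴴ * R k i)))

lemma Kgen_eq_add_sum_rateDissipator {n d : ℕ} {A : Type*} [Fintype A]
    (H : Fin n → Matrix (Fin d) (Fin d) ℂ) (R : A → Fin n → Fin n → Matrix (Fin d) (Fin d) ℂ)
    (τ : Fin n → Matrix (Fin d) (Fin d) ℂ) (i : Fin n) :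
    Kgen H R τ i = -Complex.I • (H i * τ i - τ i * H i) + ∑ α, rateDissipator (R α) τ i := rfl

section BlockDissipator

variable {m ι : Type*} [Fintype m] [Fintype ι] [DecidableEq ι] (τ : Matrix (m × ι) (m × ι) ℂ)
  (i : ι)

lemma blockAt_dissipator {A : Matrix (m × ι) (m × ι) ℂ} {C : ι → Matrix m m ℂ} {g : ι → ι}
    (hA : ∀ j k, blockAt A j k = if k = g j then C j else 0) :
    blockAt (dissipator A τ) i i = C i * blockAt τ (g i) (g i) * (C i)ᴴ
      - (1/2 : ℂ) • ∑ l, if g l = i then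
          (C l)ᴴ * C l * blockAt τ i i + blockAt τ i i * ((C l)ᴴ * C l) else 0 := by
  have hQ := blockAt_conjTranspose_mul_self hA
  simp only [dissipator, blockAt_sub, blockAt_smul, blockAt_add,
    blockAt_mul_mul_conjTranspose hA, blockAt_blockDiagonal_mul hQ,
    blockAt_mul_blockDiagonal hQ, Finset.sum_mul, Finset.mul_sum, ← Finset.sum_add_distrib,
    ite_mul, mul_ite, zero_mul, mul_zero, ← ite_add_zero]

lemma sum_blockAt_dissipator_kronecker_single (B : ι → ι → Matrix m m ℂ) :
    ∑ p, ∑ q, blockAt (dissipator (B p q ⊗ₖ single p q 1) τ) i i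
      = rateDissipator B (fun j => blockAt τ j j) i := by
  have hA (p q j k : ι) : blockAt (B p q ⊗ₖ single p q 1) j k
      = if k = q then (if j = p then B p q else 0) else 0 := by
    rw [blockAt_kronecker_single]
    split_ifs <;> simp_all
  simp only [blockAt_dissipator τ i (hA _ _)]
  simp [rateDissipator, apply_ite conjTranspose, Finset.sum_sub_distrib, Finset.sum_add_distrib,
    ← ite_and]

lemma blockAt_dissipator_blockDiagonal (L : ι → Matrix m m ℂ) :
    blockAt (dissipator (∑ j, L j ⊗ₖ single j j 1) τ) i i
      = rateDissipator (fun j k => if j = k then L j else 0) (fun j => blockAt τ j j) i := by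
  rw [blockAt_dissipator τ i (blockAt_sum_kronecker_single_self L)]
  simp [rateDissipator, apply_ite conjTranspose, Finset.sum_sub_distrib, Finset.sum_add_distrib,
    ← ite_and]

lemma sum_blockAt_dissipator_column (B : ι → ι → Matrix m m ℂ) :
    ∑ x, blockAt (dissipator (∑ j, B j x ⊗ₖ single j x 1) τ) i i
      = rateDissipator B (fun j => blockAt τ j j) i := by
  simp only [blockAt_dissipator τ i (blockAt_sum_kronecker_single (B · _) fun _ => _)]
  simp [rateDissipator, Finset.sum_sub_distrib, Finset.sum_add_distrib, Finset.smul_sum]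

lemma blockAt_lindGen_of_blockDiagonal {γ : Type*} [Fintype γ] (H : ι → Matrix m m ℂ)
    (A : γ → Matrix (m × ι) (m × ι) ℂ) :
    blockAt (lindGen (∑ j, H j ⊗ₖ single j j 1) A τ) i i
      = -Complex.I • (H i * blockAt τ i i - blockAt τ i i * H i)
        + ∑ c, blockAt (dissipator (A c) τ) i i := by
  have hH := blockAt_sum_kronecker_single_self (m' := m) H
  simp only [lindGen_eq_add_sum_dissipator, blockAt_add, blockAt_smul, blockAt_sub, blockAt_sum,
    blockAt_blockDiagonal_mul hH, blockAt_mul_blockDiagonal hH]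

end BlockDissipator

theorem ltilde_lL_same_diagonal_blocks_general {n d m₁ m₂ : ℕ}
    (H : Fin n → Matrix (Fin d) (Fin d) ℂ)
    (L : Fin m₁ → Fin n → Matrix (Fin d) (Fin d) ℂ)
    (R : Fin m₂ → Fin n → Fin n → Matrix (Fin d) (Fin d) ℂ) :
    ∀ τ : Matrix (Fin d × Fin n) (Fin d × Fin n) ℂ, ∀ i : Fin n,
      blk (lindGen (∑ j : Fin n, H j ⊗ₖ Matrix.single j j (1 : ℂ))
        (fun x : (Fin m₁ ⊕ Fin m₂) × Fin n × Fin n =>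
          Rfull L R x.1 x.2.1 x.2.2 ⊗ₖ Matrix.single x.2.1 x.2.2 (1 : ℂ)) τ) i
        = Kgen H (Rfull L R) (fun j => blk τ j) i ∧
      blk (lindGen (∑ j : Fin n, H j ⊗ₖ Matrix.single j j (1 : ℂ))
        (Sum.elim
          (fun α : Fin m₁ => ∑ j : Fin n, L α j ⊗ₖ Matrix.single j j (1 : ℂ))
          (fun x : Fin m₂ × Fin n =>
            ∑ j : Fin n, R x.1 j x.2 ⊗ₖ Matrix.single j x.2 (1 : ℂ))) τ) i
        = Kgen H (Rfull L R) (fun j => blk τ j) i := by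
  intro τ i
  simp only [blk_eq_blockAt, blockAt_lindGen_of_blockDiagonal, Kgen_eq_add_sum_rateDissipator]
  refine ⟨?_, ?_⟩ <;> congr 1
  · rw [Fintype.sum_prod_type]
    refine Finset.sum_congr rfl fun α _ => ?_
    rw [Fintype.sum_prod_type]
    exact sum_blockAt_dissipator_kronecker_single τ i (Rfull L R α)
  · rw [Fintype.sum_sum_type, Fintype.sum_sum_type, Fintype.sum_prod_type]
    congr 1
    · exact Finset.sum_congr rfl fun α _ => blockAt_dissipator_blockDiagonal τ i (L α)
    · exact Finset.sum_congr rfl fun β _ => sum_blockAt_dissipator_column τ i (R β)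

/-- The two extended Lindblad generators `𝓛̃` (with Lindblad operators `S^{ij}_α = R^{ij}_α ⊗ Eᵢⱼ`)
and `𝓛` (with Lindblad operators `V_α = ∑ᵢ Lⁱ_α ⊗ Eᵢᵢ` and `S^j_β = ∑ᵢ R^{ij}_β ⊗ Eᵢⱼ`)
have identical diagonal blocks: for every `τ` and every `i`, the `i`-th diagonal block of
`𝓛̃[τ]` equals the `i`-th diagonal block of `𝓛[τ]`, and both equal `𝒦ᵢ(τ₁,…,τₙ)` where the
`τⱼ` are the diagonal blocks of `τ`. -/
theorem ltilde_lL_same_diagonal_blocks {n d m₁ m₂ : ℕ} (hn : 1 ≤ n) (hd : 1 ≤ d)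
    (H : Fin n → Matrix (Fin d) (Fin d) ℂ) (hH : ∀ i, (H i).IsHermitian)
    (L : Fin m₁ → Fin n → Matrix (Fin d) (Fin d) ℂ)
    (R : Fin m₂ → Fin n → Fin n → Matrix (Fin d) (Fin d) ℂ) :
    ∀ τ : Matrix (Fin d × Fin n) (Fin d × Fin n) ℂ, ∀ i : Fin n,
      blk (lindGen (∑ j : Fin n, H j ⊗ₖ Matrix.single j j (1 : ℂ))
        (fun x : (Fin m₁ ⊕ Fin m₂) × Fin n × Fin n =>
          Rfull L R x.1 x.2.1 x.2.2 ⊗ₖ Matrix.single x.2.1 x.2.2 (1 : ℂ)) τ) i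
        = Kgen H (Rfull L R) (fun j => blk τ j) i ∧
      blk (lindGen (∑ j : Fin n, H j ⊗ₖ Matrix.single j j (1 : ℂ))
        (Sum.elim
          (fun α : Fin m₁ => ∑ j : Fin n, L α j ⊗ₖ Matrix.single j j (1 : ℂ))
          (fun x : Fin m₂ × Fin n =>
            ∑ j : Fin n, R x.1 j x.2 ⊗ₖ Matrix.single j x.2 (1 : ℂ))) τ) i
        = Kgen H (Rfull L R) (fun j => blk τ j) i :=
  ltilde_lL_same_diagonal_blocks_general H L R
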